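/- arXiv:1811.03355 — 2 statements merged into one kernel-verified Lean document; each statement's English description precedes it below -/
import Mathlib

section
/- In a finitary argumentation framework, the defense function is downward continuous on directed intersections: for any downward directed family D of subsets of A, d(⋂_{X ∈ D} X) = ⋂_{X ∈ D} d(X). -/
variable {A : Type*}

/-- The defense function of an argumentation framework with attack relation `r`. -/
def defense (r : A → A → Prop) (X : Set A) : Set A :=
  {x | ∀ y, r y x → ∃ z ∈ X, r z y}

/-- The neutrality function. -/
def neut (r : A → A → Prop) (X : Set A) : Set A :=
  {x | ¬ ∃ y ∈ X, r y x}

/-- A framework is finitary if every argument has finitely many attackers. -/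
def Finitary (r : A → A → Prop) : Prop := ∀ x, {y | r y x}.Finite

/-! Monotonicity of `defense` gives `⊆`. For `⊇`, let `x` lie in every `d(X)` and let `y` attack
`x`. If no attacker of `y` lay in `⋂ D`, the finitely many attackers of `y` would each miss some
member of `D`, so by directedness they would all miss a single `Z ∈ D`; but `x ∈ d(Z)`. -/

theorem defense_mono (r : A → A → Prop) : Monotone (defense r) :=
  fun _ _ hXY _ hx y hyx => (hx y hyx).imp fun _ ⟨hz, hzy⟩ => ⟨hXY hz, hzy⟩

theorem Set.Finite.exists_mem_disjoint_of_disjoint_biInter {α : Type*} {S : Set α}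
    (hS : S.Finite) {D : Set (Set α)} (hne : D.Nonempty) (hdir : DirectedOn (· ⊇ ·) D)
    (hdisj : Disjoint S (⋂ X ∈ D, X)) : ∃ Z ∈ D, Disjoint S Z := by
  have hcover : (hS.toFinset : Set α) ⊆ ⋃ X ∈ D, Xᶜ := by
    rw [hS.coe_toFinset, ← Set.compl_iInter₂]
    exact Set.subset_compl_iff_disjoint_right.2 hdisj
  have hdir_compl : DirectedOn (fun X Y : Set α => Xᶜ ⊆ Yᶜ) D :=
    hdir.mono fun _ _ => Set.compl_subset_compl.2
  obtain ⟨Z, hZ, hSZ⟩ := hdir_compl.exists_mem_subset_of_finset_subset_biUnion hne hcover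
  rw [hS.coe_toFinset] at hSZ
  exact ⟨Z, hZ, Set.subset_compl_iff_disjoint_right.1 hSZ⟩

theorem biInter_defense_subset_defense_biInter {r : A → A → Prop} (hfin : Finitary r)
    {D : Set (Set A)} (hne : D.Nonempty) (hdir : DirectedOn (· ⊇ ·) D) :
    ⋂ X ∈ D, defense r X ⊆ defense r (⋂ X ∈ D, X) := by
  intro x hx y hyx
  by_contra hnone
  have hdisj : Disjoint {z | r z y} (⋂ X ∈ D, X) :=
    Set.disjoint_left.2 fun z hzy hz => hnone ⟨z, hz, hzy⟩
  obtain ⟨Z, hZ, hZdisj⟩ := (hfin y).exists_mem_disjoint_of_disjoint_biInter hne hdir hdisj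
  obtain ⟨z, hz, hzy⟩ := Set.mem_iInter₂.1 hx Z hZ y hyx
  exact Set.disjoint_left.1 hZdisj hzy hz

theorem defense_downward_continuous (r : A → A → Prop) (hfin : Finitary r)
    (D : Set (Set A)) (hne : D.Nonempty)
    (hdir : ∀ X ∈ D, ∀ Y ∈ D, ∃ Z ∈ D, Z ⊆ X ∧ Z ⊆ Y) :
    defense r (⋂ X ∈ D, X) = ⋂ X ∈ D, defense r X :=
  (Set.subset_iInter₂ fun X hX => defense_mono r (Set.iInter₂_subset X hX)).antisymm
    (biInter_defense_subset_defense_biInter hfin hne hdir)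
end

section
/- Let Δ be a finitary argumentation framework, m, n positive integers with n ≥ m, and X ⊆ A with X ⊆ d_{m,n}(X) and X ⊆ n_m(X). Then ⋃_{k < ω} d_{m,n}^k(X) is the least fixpoint of d_{m,n} containing X. -/
/-!
In a finitary framework `grDef r m n` is monotone and commutes with unions of increasing chains:
whether `x` is defended by a set depends only on the attackers of the finitely many attackers of `x`
inside it, and along an increasing chain each of these finite sets is eventually constant. Since
`X ⊆ grDef r m n X`, the iterates form such a chain, so its union is a fixpoint (Kleene), and it lies
in every fixpoint containing `X` by monotonicity.
-/

variable {A : Type*}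

/-- Graded neutrality: arguments with fewer than `ℓ` attackers in `X`. -/
def grNeut (r : A → A → Prop) (ℓ : ℕ) (X : Set A) : Set A :=
  {x | {y ∈ X | r y x}.encard < (ℓ : ℕ∞)}

/-- Graded defense: arguments with fewer than `m` attackers that have
fewer than `n` counter-attackers in `X`. -/
def grDef (r : A → A → Prop) (m n : ℕ) (X : Set A) : Set A :=
  {x | {y | r y x ∧ {z ∈ X | r z y}.encard < (n : ℕ∞)}.encard < (m : ℕ∞)}

open Filter

lemma grDef_mono (r : A → A → Prop) (m n : ℕ) : Monotone (grDef r m n) := by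
  intro X Y hXY x hx
  refine lt_of_le_of_lt (Set.encard_mono ?_) hx
  rintro y ⟨hyx, hy⟩
  have hsub : {z ∈ X | r z y} ⊆ {z ∈ Y | r z y} := fun z hz => ⟨hXY hz.1, hz.2⟩
  exact ⟨hyx, lt_of_le_of_lt (Set.encard_mono hsub) hy⟩

lemma Finitary.eventually_attackers_eq_iUnion {r : A → A → Prop} (hfin : Finitary r)
    {C : ℕ → Set A} (hC : Monotone C) (y : A) :
    ∀ᶠ k in atTop, {z ∈ C k | r z y} = {z ∈ ⋃ j, C j | r z y} := by
  have hS : {z ∈ ⋃ j, C j | r z y}.Finite := (hfin y).subset fun z hz => hz.2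
  have hmem : ∀ᶠ k in atTop, ∀ z ∈ {z ∈ ⋃ j, C j | r z y}, z ∈ C k := by
    refine (eventually_all_finite hS).2 fun z hz => ?_
    obtain ⟨j, hj⟩ := Set.mem_iUnion.1 hz.1
    exact (eventually_ge_atTop j).mono fun k hk => hC hk hj
  refine hmem.mono fun k hk => Set.Subset.antisymm ?_ fun z hz => ⟨hk z hz, hz.2⟩
  exact fun z hz => ⟨Set.mem_iUnion_of_mem k hz.1, hz.2⟩

lemma Finitary.grDef_iUnion_subset {r : A → A → Prop} (hfin : Finitary r) (m n : ℕ)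
    {C : ℕ → Set A} (hC : Monotone C) :
    grDef r m n (⋃ k, C k) ⊆ ⋃ k, grDef r m n (C k) := by
  intro x hx
  have hstable : ∀ᶠ k in atTop, ∀ y ∈ {y | r y x},
      {z ∈ C k | r z y} = {z ∈ ⋃ j, C j | r z y} :=
    (eventually_all_finite (hfin x)).2 fun y _ => hfin.eventually_attackers_eq_iUnion hC y
  obtain ⟨k, hk⟩ := hstable.exists
  refine Set.mem_iUnion_of_mem k ?_
  have hgood : {y | r y x ∧ {z ∈ C k | r z y}.encard < (n : ℕ∞)} =
      {y | r y x ∧ {z ∈ ⋃ j, C j | r z y}.encard < (n : ℕ∞)} := by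
    ext y
    exact and_congr_right fun hy => by rw [hk y hy]
  simpa only [grDef, Set.mem_ofPred_eq, hgood] using hx

lemma iSup_iterate_isLeast_fixedPoint {α : Type*} [CompleteLattice α] {f : α → α}
    (hf : Monotone f) (hcont : ∀ C : ℕ → α, Monotone C → f (⨆ k, C k) ≤ ⨆ k, f (C k))
    {x : α} (hx : x ≤ f x) :
    f (⨆ k, f^[k] x) = ⨆ k, f^[k] x ∧ x ≤ ⨆ k, f^[k] x ∧
      ∀ z, f z = z → x ≤ z → (⨆ k, f^[k] x) ≤ z := by
  have hchain : Monotone fun k => f^[k] x := hf.monotone_iterate_of_le_map hx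
  have hstep : ∀ k, f^[k + 1] x = f (f^[k] x) := fun k => Function.iterate_succ_apply' f k x
  refine ⟨le_antisymm ?_ ?_, le_iSup (fun k => f^[k] x) 0, ?_⟩
  · refine (hcont _ hchain).trans (iSup_le fun k => ?_)
    exact hstep k ▸ le_iSup (fun k => f^[k] x) (k + 1)
  · refine iSup_le fun k => ?_
    calc f^[k] x ≤ f^[k + 1] x := hchain (Nat.le_add_right k 1)
      _ = f (f^[k] x) := hstep k
      _ ≤ f (⨆ k, f^[k] x) := hf (le_iSup (fun k => f^[k] x) k)
  · intro z hz hxz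
    refine iSup_le fun k => ?_
    calc f^[k] x ≤ f^[k] z := hf.iterate k hxz
      _ = z := Function.iterate_fixed hz k

theorem graded_iUnion_iterates_lfp_general (r : A → A → Prop) (hfin : Finitary r)
    (m n : ℕ)
    (X : Set A) (hdef : X ⊆ grDef r m n X) :
    grDef r m n (⋃ k, (grDef r m n)^[k] X) = ⋃ k, (grDef r m n)^[k] X ∧
      X ⊆ ⋃ k, (grDef r m n)^[k] X ∧
      ∀ Z, grDef r m n Z = Z → X ⊆ Z → (⋃ k, (grDef r m n)^[k] X) ⊆ Z :=
  iSup_iterate_isLeast_fixedPoint (grDef_mono r m n)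
    (fun _ hC => hfin.grDef_iUnion_subset m n hC) hdef

theorem graded_iUnion_iterates_lfp (r : A → A → Prop) (hfin : Finitary r)
    (m n : ℕ) (hm : 0 < m) (hn : 0 < n) (hnm : m ≤ n)
    (X : Set A) (hdef : X ⊆ grDef r m n X) (hcf : X ⊆ grNeut r m X) :
    grDef r m n (⋃ k, (grDef r m n)^[k] X) = ⋃ k, (grDef r m n)^[k] X ∧
      X ⊆ ⋃ k, (grDef r m n)^[k] X ∧
      ∀ Z, grDef r m n Z = Z → X ⊆ Z → (⋃ k, (grDef r m n)^[k] X) ⊆ Z :=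
  graded_iUnion_iterates_lfp_general r hfin m n X hdef
end
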